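/- arXiv:1709.01649 — 2 statements merged into one kernel-verified Lean document; each statement's English description precedes it below -/
import Mathlib

section
/- Let A be a unital C*-algebra, let ψ be a state on A, and let (Δ_n) be a characteristic sequence for ψ. Then for every state φ on A with φ ≠ ψ, one has limsup_{n→∞} |φ(Δ_n)| < 1. -/
/-!
If `‖φ (Δ n)‖` came arbitrarily close to `1`, a subsequence `φ (Δ (x j))` would converge to some
`l` with `‖l‖ = 1`, and the rotated elements `e j = conj l • Δ (x j)` would satisfy `φ (e j) → 1`.
In the GNS space of `φ` this means `‖1 - e j‖_φ ^ 2 ≤ 2 (1 - re φ (e j)) → 0`, and Cauchy–Schwarz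
then gives `φ (e j⋆ a e j) → φ a`. As `e j⋆ a e j = Δ (x j)⋆ a Δ (x j)`, the defining property of a
characteristic sequence yields `‖φ a‖ ≤ ‖ψ a‖` for all `a`, so `ker ψ ⊆ ker φ`; together with
`φ 1 = ψ 1 = 1` this forces `φ = ψ`.
-/

open Filter Topology
open scoped ComplexOrder

/-- A state on a unital C⋆-algebra: a positive linear functional of norm one. -/
def IsState {A : Type*} [CStarAlgebra A] (φ : A →L[ℂ] ℂ) : Prop :=
  ‖φ‖ = 1 ∧ ∀ a : A, 0 ≤ φ (star a * a)

/-- A characteristic sequence for a state `ψ`: a sequence of norm-one elements with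
`ψ (Δ n) → 1` and `limsup ‖Δ n⋆ * a * Δ n‖ ≤ |ψ a|` for every `a`. -/
def IsCharacteristicSequence {A : Type*} [CStarAlgebra A] (ψ : A →L[ℂ] ℂ) (Δ : ℕ → A) : Prop :=
  (∀ n, ‖Δ n‖ = 1) ∧ Tendsto (fun n => ψ (Δ n)) atTop (nhds 1) ∧
    ∀ a : A, limsup (fun n => ‖star (Δ n) * a * Δ n‖) atTop ≤ ‖ψ a‖

lemma exists_subseq_tendsto_of_norm_eq_limsup {E : Type*} [NormedAddCommGroup E] [ProperSpace E]
    {u : ℕ → E} {r : ℝ} (hu : ∀ n, ‖u n‖ ≤ r) :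
    ∃ (l : E) (x : ℕ → ℕ), ‖l‖ = limsup (fun n => ‖u n‖) atTop ∧ Tendsto x atTop atTop ∧
      Tendsto (u ∘ x) atTop (𝓝 l) := by
  obtain ⟨x, hx_lim, hx⟩ := exists_seq_tendsto_limsup (f := atTop) (u := fun n => ‖u n‖)
    (isCoboundedUnder_le_of_le atTop fun n => norm_nonneg _) (isBoundedUnder_of ⟨r, hu⟩)
  obtain ⟨l, -, k, hk, hl⟩ := (isCompact_closedBall (0 : E) r).tendsto_subseq (x := u ∘ x)
    fun n => by simpa using hu (x n)
  exact ⟨l, x ∘ k, tendsto_nhds_unique hl.norm (hx_lim.comp hk.tendsto_atTop),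
    hx.comp hk.tendsto_atTop, hl⟩

lemma LinearMap.eq_of_norm_apply_le_of_apply_eq {𝕜 M : Type*} [NormedField 𝕜] [AddCommGroup M]
    [Module 𝕜 M] {φ ψ : M →ₗ[𝕜] 𝕜} {u : M} (hu : φ u = ψ u) (hψu : ψ u ≠ 0)
    (h : ∀ a, ‖φ a‖ ≤ ‖ψ a‖) : φ = ψ := by
  ext b
  have hb := h (b - (ψ b / ψ u) • u)
  rw [map_sub, map_sub, map_smul, map_smul, hu, smul_eq_mul, div_mul_cancel₀ _ hψu, sub_self,
    norm_zero, norm_le_zero_iff, sub_eq_zero] at hb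
  exact hb

namespace IsState

-- With the spectral order, `0 ≤ x ↔ ∃ b, x = b⋆ b`, so a state is a positive linear map and
-- Mathlib's GNS construction applies to it.
attribute [local instance] CStarAlgebra.spectralOrder CStarAlgebra.spectralOrderedRing

variable {A : Type*} [CStarAlgebra A] {φ : A →L[ℂ] ℂ}

lemma norm_apply_le (hφ : IsState φ) (x : A) : ‖φ x‖ ≤ ‖x‖ := by
  simpa [hφ.1] using φ.le_opNorm x

noncomputable def toPositiveLinearMap (hφ : IsState φ) : A →ₚ[ℂ] ℂ :=
  .mk₀ φ fun x hx => by
    obtain ⟨b, rfl⟩ := CStarAlgebra.nonneg_iff_eq_star_mul_self.mp hx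
    exact hφ.2 b

noncomputable abbrev toGNS (hφ : IsState φ) : A ≃ₗ[ℂ] hφ.toPositiveLinearMap.PreGNS :=
  hφ.toPositiveLinearMap.toPreGNS

lemma inner_toGNS (hφ : IsState φ) (x y : A) :
    inner ℂ (hφ.toGNS x) (hφ.toGNS y) = φ (star x * y) :=
  rfl

lemma norm_toGNS_sq (hφ : IsState φ) (x : A) : ‖hφ.toGNS x‖ ^ 2 = (φ (star x * x)).re := by
  rw [← inner_self_eq_norm_sq (𝕜 := ℂ), inner_toGNS, RCLike.re_to_complex]

lemma norm_toGNS_le (hφ : IsState φ) (x : A) : ‖hφ.toGNS x‖ ≤ ‖x‖ := by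
  refine (sq_le_sq₀ (norm_nonneg _) (norm_nonneg _)).mp ?_
  calc ‖hφ.toGNS x‖ ^ 2 = (φ (star x * x)).re := hφ.norm_toGNS_sq x
    _ ≤ ‖star x * x‖ := (Complex.re_le_norm _).trans (hφ.norm_apply_le _)
    _ = ‖x‖ ^ 2 := by rw [CStarRing.norm_star_mul_self, sq]

lemma apply_one (hφ : IsState φ) : φ 1 = 1 := by
  obtain hA | hA := subsingleton_or_nontrivial A
  · simpa [Subsingleton.elim φ 0] using hφ.1
  have hnonneg : 0 ≤ φ 1 := by simpa using hφ.2 1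
  have hle : (φ 1).re ≤ 1 :=
    (Complex.re_le_norm _).trans <| (hφ.norm_apply_le 1).trans CStarRing.norm_one.le
  have hge : 1 ≤ (φ 1).re := by
    have hnorm : ‖φ‖ ≤ ‖hφ.toGNS 1‖ := φ.opNorm_le_bound (norm_nonneg _) fun x => by
      calc ‖φ x‖ = ‖inner ℂ (hφ.toGNS 1) (hφ.toGNS x)‖ := by rw [inner_toGNS, star_one, one_mul]
        _ ≤ ‖hφ.toGNS 1‖ * ‖hφ.toGNS x‖ := norm_inner_le_norm _ _
        _ ≤ ‖hφ.toGNS 1‖ * ‖x‖ := by gcongr; exact hφ.norm_toGNS_le x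
    have := pow_le_pow_left₀ (norm_nonneg _) hnorm 2
    rwa [hφ.1, hφ.norm_toGNS_sq, star_one, one_mul, one_pow] at this
  exact Complex.ext (by simpa using le_antisymm hle hge)
    (by simpa using (Complex.nonneg_iff.mp hnonneg).2.symm)

lemma norm_toGNS_one_sub_sq_le (hφ : IsState φ) {e : A} (he : ‖e‖ ≤ 1) :
    ‖hφ.toGNS (1 - e)‖ ^ 2 ≤ 2 * (1 - (φ e).re) := by
  have hone : ‖hφ.toGNS 1‖ ^ 2 = 1 := by simp [hφ.norm_toGNS_sq, hφ.apply_one]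
  have he' : ‖hφ.toGNS e‖ ^ 2 ≤ 1 := pow_le_one₀ (norm_nonneg _) ((hφ.norm_toGNS_le e).trans he)
  rw [map_sub, norm_sub_sq (𝕜 := ℂ), hone, inner_toGNS, star_one, one_mul]
  simp only [RCLike.re_to_complex]
  linarith

/-- The identity `a - e⋆ a e = (1 - e)⋆ a + (a⋆ e)⋆ (1 - e)` and Cauchy–Schwarz in the GNS space. -/
lemma norm_apply_sub_apply_star_mul_mul_le (hφ : IsState φ) {e : A} (he : ‖e‖ ≤ 1) (a : A) :
    ‖φ a - φ (star e * a * e)‖ ≤ 2 * ‖a‖ * ‖hφ.toGNS (1 - e)‖ := by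
  have hsplit : φ a - φ (star e * a * e) = inner ℂ (hφ.toGNS (1 - e)) (hφ.toGNS a) +
      inner ℂ (hφ.toGNS (star a * e)) (hφ.toGNS (1 - e)) := by
    simp only [inner_toGNS, ← map_add, ← map_sub, star_sub, star_one, star_mul, star_star]
    congr 1
    noncomm_ring
  have hae : ‖hφ.toGNS (star a * e)‖ ≤ ‖a‖ :=
    (hφ.norm_toGNS_le _).trans <| (norm_mul_le _ _).trans <| by
      rw [norm_star]; exact mul_le_of_le_one_right (norm_nonneg a) he
  calc ‖φ a - φ (star e * a * e)‖
      ≤ ‖hφ.toGNS (1 - e)‖ * ‖hφ.toGNS a‖ + ‖hφ.toGNS (star a * e)‖ * ‖hφ.toGNS (1 - e)‖ := by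
        rw [hsplit]
        exact (norm_add_le _ _).trans (add_le_add (norm_inner_le_norm _ _) (norm_inner_le_norm _ _))
    _ ≤ ‖hφ.toGNS (1 - e)‖ * ‖a‖ + ‖a‖ * ‖hφ.toGNS (1 - e)‖ := by
        gcongr
        exact hφ.norm_toGNS_le a
    _ = 2 * ‖a‖ * ‖hφ.toGNS (1 - e)‖ := by ring

lemma tendsto_apply_star_mul_mul (hφ : IsState φ) {ι : Type*} {F : Filter ι} {e : ι → A}
    (he : ∀ i, ‖e i‖ ≤ 1) (hφe : Tendsto (fun i => φ (e i)) F (𝓝 1)) (a : A) :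
    Tendsto (fun i => φ (star (e i) * a * e i)) F (𝓝 (φ a)) := by
  have hdefect : Tendsto (fun i => √(2 * (1 - (φ (e i)).re))) F (𝓝 0) := by
    simpa using ((Complex.continuous_re.tendsto _).comp hφe).const_sub 1 |>.const_mul 2 |>.sqrt
  rw [tendsto_iff_norm_sub_tendsto_zero]
  refine squeeze_zero (g := fun i => 2 * ‖a‖ * √(2 * (1 - (φ (e i)).re)))
    (fun i => norm_nonneg _) (fun i => ?_) (by simpa only [mul_zero] using hdefect.const_mul _)
  rw [norm_sub_rev]
  refine (hφ.norm_apply_sub_apply_star_mul_mul_le (he i) a).trans ?_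
  exact mul_le_mul_of_nonneg_left (Real.le_sqrt_of_sq_le (hφ.norm_toGNS_one_sub_sq_le (he i)))
    (by positivity)

end IsState

lemma norm_star_mul_mul_le {A : Type*} [NonUnitalNormedRing A] [StarRing A] [NormedStarGroup A]
    {d : A} (hd : ‖d‖ ≤ 1) (a : A) :
    ‖star d * a * d‖ ≤ ‖a‖ :=
  calc ‖star d * a * d‖ ≤ ‖d‖ * ‖a‖ * ‖d‖ := by
        simpa only [norm_star] using norm_mul₃_le (a := star d) (b := a) (c := d)
    _ ≤ 1 * ‖a‖ * 1 := by gcongr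
    _ = ‖a‖ := by ring

/-- Rotating the subsequence by `conj l` does not change `Δ⋆ a Δ` but makes `φ` tend to `1`. -/
lemma IsCharacteristicSequence.norm_apply_le_of_tendsto_subseq {A : Type*} [CStarAlgebra A]
    {ψ φ : A →L[ℂ] ℂ} {Δ : ℕ → A} (hΔ : IsCharacteristicSequence ψ Δ) (hφ : IsState φ)
    {x : ℕ → ℕ} (hx : Tendsto x atTop atTop) {l : ℂ} (hl : ‖l‖ = 1)
    (hφΔ : Tendsto (fun j => φ (Δ (x j))) atTop (𝓝 l)) (a : A) : ‖φ a‖ ≤ ‖ψ a‖ := by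
  set e : ℕ → A := fun j => (starRingEnd ℂ l) • Δ (x j)
  have he : ∀ j, ‖e j‖ ≤ 1 := fun j => by simp [e, norm_smul, hl, hΔ.1]
  have hφe : Tendsto (fun j => φ (e j)) atTop (𝓝 1) := by
    simpa [e, Complex.conj_mul', hl] using hφΔ.const_mul (starRingEnd ℂ l)
  have hconj : ∀ j, star (e j) * a * e j = star (Δ (x j)) * a * Δ (x j) := fun j => by
    simp only [e, star_smul, RCLike.star_def, Complex.conj_conj, smul_mul_assoc, mul_smul_comm,
      smul_smul]
    rw [Complex.conj_mul', hl, Complex.ofReal_one, one_pow, one_smul]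
  have hnorm : ∀ n, ‖star (Δ n) * a * Δ n‖ ≤ ‖a‖ := fun n => norm_star_mul_mul_le (hΔ.1 n).le a
  calc ‖φ a‖ = limsup (fun j => ‖φ (star (e j) * a * e j)‖) atTop :=
        ((hφ.tendsto_apply_star_mul_mul he hφe a).norm.limsup_eq).symm
    _ ≤ limsup ((fun n => ‖star (Δ n) * a * Δ n‖) ∘ x) atTop :=
        limsup_le_limsup (Eventually.of_forall fun j => by
          rw [Function.comp_apply, ← hconj]; exact hφ.norm_apply_le _)
          (isCoboundedUnder_le_of_le atTop fun _ => norm_nonneg _)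
          (isBoundedUnder_of ⟨‖a‖, fun j => hnorm (x j)⟩)
    _ ≤ limsup (fun n => ‖star (Δ n) * a * Δ n‖) atTop :=
        hx.limsup_comp_le_limsup (isCoboundedUnder_le_of_le _ fun _ => norm_nonneg _)
          (isBoundedUnder_of ⟨‖a‖, hnorm⟩)
    _ ≤ ‖ψ a‖ := hΔ.2.2 a

/-- if `(Δ n)` is a characteristic sequence for the state `ψ`, then
`limsup |φ (Δ n)| < 1` for every state `φ ≠ ψ`. -/
theorem stmt6 {A : Type*} [CStarAlgebra A]
    (ψ : A →L[ℂ] ℂ) (hψ : IsState ψ) (Δ : ℕ → A) (hΔ : IsCharacteristicSequence ψ Δ) :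
    ∀ φ : A →L[ℂ] ℂ, IsState φ → φ ≠ ψ →
      limsup (fun n => ‖φ (Δ n)‖) atTop < 1 := by
  intro φ hφ hne
  have hbound : ∀ n, ‖φ (Δ n)‖ ≤ 1 := fun n => (hφ.norm_apply_le _).trans (hΔ.1 n).le
  refine (limsup_le_of_le (isCoboundedUnder_le_of_le atTop fun _ => norm_nonneg _)
    (Eventually.of_forall hbound)).lt_of_ne fun hlimsup => hne ?_
  obtain ⟨l, x, hl, hx, hφΔ⟩ := exists_subseq_tendsto_of_norm_eq_limsup hbound
  have hle : ∀ a, ‖φ a‖ ≤ ‖ψ a‖ :=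
    hΔ.norm_apply_le_of_tendsto_subseq hφ hx (hl.trans hlimsup) hφΔ
  refine ContinuousLinearMap.coe_injective <|
    LinearMap.eq_of_norm_apply_le_of_apply_eq (u := 1) ?_ ?_ hle
  · simp [hφ.apply_one, hψ.apply_one]
  · simp [hψ.apply_one]
end

section
/- Let A be a unital C*-algebra, let S ⊂ A be an operator system, and let ψ be a state on A admitting a characteristic sequence (Δ_n) with Δ_n ∈ S for every n. Then ψ has the unique extension property with respect to S. -/
open Filter Topology
open scoped ComplexOrder

/-- The unique extension property of a state with respect to an operator system. -/
def HasUEP {A : Type*} [CStarAlgebra A] (S : Submodule ℂ A) (ψ : A →L[ℂ] ℂ) : Prop :=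
  ∀ φ : A →L[ℂ] ℂ, IsState φ → (∀ s ∈ S, φ s = ψ s) → φ = ψ

/-! Let `φ` be a state agreeing with `ψ` on `S`. Since `Δₙ ∈ S`, in the GNS space of `φ`
`‖Δₙ - 1‖² = φ(Δₙ⋆Δₙ) - 2 Re ψ(Δₙ) + 1 ≤ 2 - 2 Re ψ(Δₙ) → 0`, so `Δₙ → 1` there and
`φ(Δₙ⋆ b Δₙ) = ⟪Δₙ, b Δₙ⟫ → ⟪1, b⟫ = φ(b)`. For `b = a - ψ(a) 1` the characteristic sequence
gives `‖Δₙ⋆ b Δₙ‖ → |ψ(b)| = 0`, hence `φ(b) = 0`, i.e. `φ(a) = ψ(a)`. -/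

namespace PositiveLinearMap

variable {A : Type*} [CStarAlgebra A] [PartialOrder A] [StarOrderedRing A] (f : A →ₚ[ℂ] ℂ)

lemma norm_toPreGNS_sub_one_sq_le {x : A} (hx : ‖x‖ ≤ 1) :
    ‖f.toPreGNS x - f.toPreGNS 1‖ ^ 2 ≤ 2 * (f 1 - f x).re := by
  have hxx : (f (star x * x)).re ≤ (f 1).re := by
    have : star x * x ≤ 1 := by
      calc star x * x ≤ algebraMap ℝ A (‖x‖ ^ 2) := CStarAlgebra.star_mul_le_algebraMap_norm_sq
        _ ≤ algebraMap ℝ A 1 := by gcongr; exact pow_le_one₀ (norm_nonneg x) hx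
        _ = 1 := map_one _
    exact (Complex.le_def.mp (OrderHomClass.mono f this)).1
  have hsq := f.preGNS_norm_sq (f.toPreGNS x - f.toPreGNS 1)
  rw [← map_sub, ofPreGNS_toPreGNS] at hsq
  have hnorm := congrArg Complex.re hsq
  simp only [star_sub, star_one, sub_mul, mul_sub, one_mul, mul_one, map_sub, map_star,
    Complex.sub_re, Complex.star_def, Complex.conj_re] at hnorm
  norm_cast at hnorm
  rw [hnorm, Complex.sub_re]
  linarith

variable {ι : Type*} {l : Filter ι}

lemma tendsto_toPreGNS_one {x : ι → A} (hx : ∀ i, ‖x i‖ ≤ 1)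
    (hfx : Tendsto (fun i => f (x i)) l (𝓝 (f 1))) :
    Tendsto (fun i => f.toPreGNS (x i)) l (𝓝 (f.toPreGNS 1)) := by
  rw [tendsto_iff_norm_sub_tendsto_zero]
  have hre : Tendsto (fun i => 2 * (f 1 - f (x i)).re) l (𝓝 0) := by
    have h : Tendsto (fun i => f 1 - f (x i)) l (𝓝 0) := by
      simpa using (tendsto_const_nhds (x := f 1)).sub hfx
    simpa using ((Complex.continuous_re.tendsto 0).comp h).const_mul 2
  have hsq := squeeze_zero (fun i => by positivity)
    (fun i => f.norm_toPreGNS_sub_one_sq_le (hx i)) hre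
  simpa using hsq.sqrt

lemma tendsto_apply_star_mul_mul {x : ι → A}
    (hx : Tendsto (fun i => f.toPreGNS (x i)) l (𝓝 (f.toPreGNS 1))) (b : A) :
    Tendsto (fun i => f (star (x i) * b * x i)) l (𝓝 (f b)) := by
  have := hx.inner (𝕜 := ℂ) (((f.leftMulMapPreGNS b).continuous.tendsto _).comp hx)
  simpa [preGNS_inner_def, mul_assoc] using this

end PositiveLinearMap

section SpectralOrder

attribute [local instance] CStarAlgebra.spectralOrder CStarAlgebra.spectralOrderedRing

variable {A F : Type*} [CStarAlgebra A] [FunLike F A ℂ] [LinearMapClass F ℂ A ℂ]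

noncomputable def PositiveLinearMap.ofNonnegStarMulSelf (φ : F)
    (hφ : ∀ a : A, 0 ≤ φ (star a * a)) : A →ₚ[ℂ] ℂ :=
  .mk₀ (LinearMapClass.linearMap φ) fun x hx => by
    obtain ⟨a, rfl⟩ := CStarAlgebra.nonneg_iff_eq_star_mul_self.mp hx
    exact hφ a

lemma tendsto_apply_star_mul_mul_of_tendsto_apply_one {φ : F}
    (hφ : ∀ a : A, 0 ≤ φ (star a * a)) {ι : Type*} {l : Filter ι} {x : ι → A}
    (hx : ∀ i, ‖x i‖ ≤ 1) (hφx : Tendsto (fun i => φ (x i)) l (𝓝 (φ 1))) (b : A) :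
    Tendsto (fun i => φ (star (x i) * b * x i)) l (𝓝 (φ b)) :=
  let f := PositiveLinearMap.ofNonnegStarMulSelf φ hφ
  f.tendsto_apply_star_mul_mul (f.tendsto_toPreGNS_one hx hφx) b

end SpectralOrder

section States

variable {A : Type*} [CStarAlgebra A] {φ ψ : A →L[ℂ] ℂ} {Δ : ℕ → A}

lemma IsState.norm_apply_le_s8 (hφ : IsState φ) (a : A) : ‖φ a‖ ≤ ‖a‖ := by
  simpa [hφ.1] using φ.le_opNorm a

lemma IsCharacteristicSequence.nontrivial (hΔ : IsCharacteristicSequence ψ Δ) : Nontrivial A :=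
  nontrivial_of_ne (Δ 0) 0 (norm_ne_zero_iff.mp (by simp [hΔ.1 0]))

lemma IsCharacteristicSequence.map_one (hψ : IsState ψ) (hΔ : IsCharacteristicSequence ψ Δ) :
    ψ 1 = 1 := by
  have := hΔ.nontrivial
  have hge : 1 ≤ ‖ψ 1‖ := by
    simpa [CStarRing.norm_star_mul_self, hΔ.1] using hΔ.2.2 1
  have hle : ‖ψ 1‖ ≤ 1 := by simpa using hψ.norm_apply_le_s8 1
  have hnonneg : 0 ≤ ψ 1 := by simpa using hψ.2 1
  rw [Complex.eq_coe_norm_of_nonneg hnonneg, le_antisymm hle hge, Complex.ofReal_one]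

lemma IsCharacteristicSequence.tendsto_star_mul_mul_of_map_eq_zero
    (hΔ : IsCharacteristicSequence ψ Δ) {b : A} (hb : ψ b = 0) :
    Tendsto (fun n => star (Δ n) * b * Δ n) atTop (𝓝 0) := by
  rw [tendsto_zero_iff_norm_tendsto_zero]
  have hbdd : ∀ n, ‖star (Δ n) * b * Δ n‖ ≤ ‖b‖ := fun n =>
    norm_mul₃_le.trans (by simp [hΔ.1 n])
  refine tendsto_order.2 ⟨fun c hc => .of_forall fun n => hc.trans_le (norm_nonneg _),
    fun c hc => eventually_lt_of_limsup_lt ?_ (isBoundedUnder_of ⟨‖b‖, hbdd⟩)⟩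
  exact (hΔ.2.2 b).trans_lt (by simpa [hb] using hc)

end States

theorem stmt8_general {A : Type*} [CStarAlgebra A]
    (S : Submodule ℂ A) (hS1 : (1 : A) ∈ S)
    (ψ : A →L[ℂ] ℂ) (hψ : IsState ψ) (Δ : ℕ → A)
    (hΔ : IsCharacteristicSequence ψ Δ) (hΔS : ∀ n, Δ n ∈ S) :
    HasUEP S ψ := by
  intro φ hφ hφψ
  have hψ1 : ψ 1 = 1 := hΔ.map_one hψ
  have hφ1 : φ 1 = 1 := (hφψ 1 hS1).trans hψ1
  have hφΔ : Tendsto (fun n => φ (Δ n)) atTop (𝓝 (φ 1)) := by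
    simpa [hφ1, hφψ _ (hΔS _)] using hΔ.2.1
  ext a
  set b := a - ψ a • 1
  have hψb : ψ b = 0 := by simp [b, hψ1]
  have hφb : φ b = 0 := by
    refine tendsto_nhds_unique (tendsto_apply_star_mul_mul_of_tendsto_apply_one hφ.2
      (fun n => (hΔ.1 n).le) hφΔ b) ?_
    exact squeeze_zero_norm (fun n => hφ.norm_apply_le_s8 _)
      (tendsto_zero_iff_norm_tendsto_zero.mp (hΔ.tendsto_star_mul_mul_of_map_eq_zero hψb))
  simpa [b, hφ1, sub_eq_zero] using hφb

/-- a state admitting a characteristic sequence lying in the operator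
system `S` has the unique extension property with respect to `S`. -/
theorem stmt8 {A : Type*} [CStarAlgebra A]
    (S : Submodule ℂ A) (hS1 : (1 : A) ∈ S) (hSstar : ∀ x ∈ S, star x ∈ S)
    (ψ : A →L[ℂ] ℂ) (hψ : IsState ψ) (Δ : ℕ → A)
    (hΔ : IsCharacteristicSequence ψ Δ) (hΔS : ∀ n, Δ n ∈ S) :
    HasUEP S ψ :=
  stmt8_general S hS1 ψ hψ Δ hΔ hΔS
end
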